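/- arXiv:1912.03615 — 4 statements merged into one kernel-verified Lean document; each statement's English description precedes it below -/
import Mathlib

section
/- Let X and Y be nonempty compact metric spaces, each of diameter at most 1, and let ε > 0. Suppose (x_1, …, x_N) is an ε-packing of X and (y_1, …, y_N) is an ε-packing of Y (with the same number N of points), and that |d_X(x_i, x_j) − d_Y(y_i, y_j)| ≤ ε for every 1 ≤ i, j ≤ N. Then the Gromov–Hausdorff distance satisfies d_GH(X, Y) ≤ 4ε. -/
/-- **Proposition (GH-closeness from matching packings).**
Let `X` and `Y` be nonempty compact metric spaces of diameter at most `1`, and let `ε > 0`.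
If `x : Fin N → X` is an `ε`-packing of `X` (pairwise distances at least `ε · diam X`,
and `ε · diam X`-dense) and `y : Fin N → Y` is an `ε`-packing of `Y`, with
`|d(x i, x j) − d(y i, y j)| ≤ ε` for all `i j`, then `d_GH(X, Y) ≤ 4ε`. -/
theorem packings_close_implies_ghDist_le
    (X : Type*) (Y : Type*) [MetricSpace X] [CompactSpace X] [Nonempty X]
    [MetricSpace Y] [CompactSpace Y] [Nonempty Y]
    (hdiamX : Metric.diam (Set.univ : Set X) ≤ 1)
    (hdiamY : Metric.diam (Set.univ : Set Y) ≤ 1)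
    {ε : ℝ} (hε : 0 < ε) {N : ℕ}
    (x : Fin N → X) (y : Fin N → Y)
    (hx_sep : ∀ i j : Fin N, i ≠ j →
      ε * Metric.diam (Set.univ : Set X) ≤ dist (x i) (x j))
    (hx_dense : ∀ p : X, ∃ i : Fin N,
      dist p (x i) ≤ ε * Metric.diam (Set.univ : Set X))
    (hy_sep : ∀ i j : Fin N, i ≠ j →
      ε * Metric.diam (Set.univ : Set Y) ≤ dist (y i) (y j))
    (hy_dense : ∀ q : Y, ∃ i : Fin N,
      dist q (y i) ≤ ε * Metric.diam (Set.univ : Set Y))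
    (hclose : ∀ i j : Fin N, |dist (x i) (x j) - dist (y i) (y j)| ≤ ε) :
    GromovHausdorff.ghDist X Y ≤ 4 * ε := by
  have hεX : ε * Metric.diam (Set.univ : Set X) ≤ ε := by
    calc ε * Metric.diam (Set.univ : Set X) ≤ ε * 1 :=
      mul_le_mul_of_nonneg_left hdiamX hε.le
    _ = ε := mul_one ε
  have hεY : ε * Metric.diam (Set.univ : Set Y) ≤ ε := by
    calc ε * Metric.diam (Set.univ : Set Y) ≤ ε * 1 :=
      mul_le_mul_of_nonneg_left hdiamY hε.le
    _ = ε := mul_one ε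
  set s : Set X := Set.range x with hs_def
  have idx : ∀ p : s, ∃ i : Fin N, x i = (p : X) := fun p => p.2
  let ind : s → Fin N := fun p => (idx p).choose
  have hind : ∀ p : s, x (ind p) = (p : X) := fun p => (idx p).choose_spec
  let Φ : s → Y := fun p => y (ind p)
  have key : GromovHausdorff.ghDist X Y ≤ ε + ε / 2 + 2 * ε := by
    apply GromovHausdorff.ghDist_le_of_approx_subsets Φ
    · intro p
      obtain ⟨i, hi⟩ := hx_dense p
      exact ⟨x i, ⟨i, rfl⟩, hi.trans hεX⟩
    · intro q
      obtain ⟨i, hi⟩ := hy_dense q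
      refine ⟨⟨x i, ⟨i, rfl⟩⟩, ?_⟩
      have h1 : dist q (y i) ≤ ε := hi.trans hεY
      have h2 : dist (y i) (Φ ⟨x i, ⟨i, rfl⟩⟩) ≤ ε := by
        have hx0 : dist (x i) (x (ind ⟨x i, ⟨i, rfl⟩⟩)) = 0 := by
          rw [hind ⟨x i, ⟨i, rfl⟩⟩]; simp
        have := hclose i (ind ⟨x i, ⟨i, rfl⟩⟩)
        rw [hx0] at this
        have := abs_le.1 this
        simpa [Φ] using by linarith [this.1]
      calc dist q (Φ ⟨x i, ⟨i, rfl⟩⟩) ≤ dist q (y i) + dist (y i) (Φ ⟨x i, ⟨i, rfl⟩⟩) :=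
        dist_triangle _ _ _
      _ ≤ ε + ε := add_le_add h1 h2
      _ = 2 * ε := by ring
    · intro p q
      have : dist (p : X) (q : X) = dist (x (ind p)) (x (ind q)) := by
        rw [hind p, hind q]
      calc |dist p q - dist (Φ p) (Φ q)|
          = |dist (x (ind p)) (x (ind q)) - dist (y (ind p)) (y (ind q))| := by
            rw [Subtype.dist_eq, this]
      _ ≤ ε := hclose _ _
  linarith
end

section
/- Let a < b < c be real numbers and let h : ℝ → ℝ be Lipschitz on [a, c]. Suppose h is convex on [a, b] and convex on [b, c], that h has a left derivative d⁻ at b (derivative at b within [a, b]) and a right derivative d⁺ at b (derivative at b within [b, c]), and that d⁻ ≤ d⁺. Then h is convex on [a, c]. -/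
/-!
On each side of `b` the slopes of secants ending (resp. starting) at `b` are bounded by the
one-sided derivative there, so every secant slope over `[a, b]` at `b` is at most every
secant slope over `[b, c]` at `b`. Since the slope over `[x, z]` is an average of the slopes over
`[x, y]` and `[y, z]`, this lets monotonicity of adjacent slopes pass across the junction.
-/

open Set AffineMap

theorem slope_mem_Icc_of_slope_le_slope {f : ℝ → ℝ} {x y z : ℝ} (hxy : x < y) (hyz : y < z)
    (hle : slope f x y ≤ slope f y z) :
    slope f x z ∈ Icc (slope f x y) (slope f y z) := by
  have hxz : x < z := hxy.trans hyz
  rw [← lineMap_slope_slope_sub_div_sub f x y z hxz.ne]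
  exact ⟨(left_le_lineMap_iff_le (div_pos (sub_pos.2 hyz) (sub_pos.2 hxz))).2 hle,
    (lineMap_le_right_iff_le ((div_lt_one (sub_pos.2 hxz)).2 (by linarith))).2 hle⟩

theorem ConvexOn.glue_of_slope_le {a b c : ℝ} {f : ℝ → ℝ}
    (h₁ : ConvexOn ℝ (Icc a b) f) (h₂ : ConvexOn ℝ (Icc b c) f)
    (hslope : ∀ x ∈ Ico a b, ∀ z ∈ Ioc b c, slope f x b ≤ slope f b z) :
    ConvexOn ℝ (Icc a c) f := by
  refine convexOn_of_slope_mono_adjacent (convex_Icc a c) fun {x y z} hx hz hxy hyz => ?_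
  rcases le_or_gt z b with hzb | hbz
  · exact h₁.slope_mono_adjacent ⟨hx.1, by linarith⟩ ⟨by linarith [hx.1], hzb⟩ hxy hyz
  rcases le_or_gt b x with hbx | hxb
  · exact h₂.slope_mono_adjacent ⟨hbx, by linarith [hz.2]⟩ ⟨by linarith, hz.2⟩ hxy hyz
  simp only [← slope_def_field]
  have hxab : x ∈ Ico a b := ⟨hx.1, hxb⟩
  have hzbc : z ∈ Ioc b c := ⟨hbz, hz.2⟩
  rcases lt_trichotomy y b with hyb | rfl | hby
  · have hyab : y ∈ Ico a b := ⟨hx.1.trans hxy.le, hyb⟩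
    calc slope f x y ≤ slope f y b := by
          simpa only [slope_def_field] using h₁.slope_mono_adjacent
            (Ico_subset_Icc_self hxab) (right_mem_Icc.2 (hyab.1.trans hyab.2.le)) hxy hyb
      _ ≤ slope f y z := (slope_mem_Icc_of_slope_le_slope hyb hbz (hslope y hyab z hzbc)).1
  · exact hslope x hxab z hzbc
  · have hybc : y ∈ Ioc b c := ⟨hby, hyz.le.trans hz.2⟩
    calc slope f x y ≤ slope f b y :=
          (slope_mem_Icc_of_slope_le_slope hxb hby (hslope x hxab y hybc)).2
      _ ≤ slope f y z := by
          simpa only [slope_def_field] using h₂.slope_mono_adjacent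
            (left_mem_Icc.2 (hybc.1.le.trans hybc.2)) (Ioc_subset_Icc_self hzbc) hby hyz

theorem convexOn_of_convexOn_glue_general
    {a b c : ℝ} {h : ℝ → ℝ}
    (hconv₁ : ConvexOn ℝ (Set.Icc a b) h)
    (hconv₂ : ConvexOn ℝ (Set.Icc b c) h)
    {dminus dplus : ℝ}
    (hdm : HasDerivWithinAt h dminus (Set.Icc a b) b)
    (hdp : HasDerivWithinAt h dplus (Set.Icc b c) b)
    (hle : dminus ≤ dplus) :
    ConvexOn ℝ (Set.Icc a c) h := by
  refine hconv₁.glue_of_slope_le hconv₂ fun x hx z hz => ?_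
  calc slope h x b ≤ dminus :=
        hconv₁.slope_le_of_hasDerivWithinAt (Ico_subset_Icc_self hx)
          (right_mem_Icc.2 (hx.1.trans hx.2.le)) hx.2 hdm
    _ ≤ dplus := hle
    _ ≤ slope h b z :=
        hconv₂.le_slope_of_hasDerivWithinAt (left_mem_Icc.2 (hz.1.le.trans hz.2))
          (Ioc_subset_Icc_self hz) hz.1 hdp

/-- **Lemma (gluing convex functions at a junction point).**
Let `h : ℝ → ℝ` be Lipschitz on `[a, c]`, convex on `[a, b]` and on `[b, c]`.
If the left derivative `d⁻` of `h` at `b` (within `[a, b]`) is at most the right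
derivative `d⁺` of `h` at `b` (within `[b, c]`), then `h` is convex on `[a, c]`. -/
theorem convexOn_of_convexOn_glue
    {a b c : ℝ} (hab : a < b) (hbc : b < c) {h : ℝ → ℝ}
    (hlip : ∃ K : NNReal, LipschitzOnWith K h (Set.Icc a c))
    (hconv₁ : ConvexOn ℝ (Set.Icc a b) h)
    (hconv₂ : ConvexOn ℝ (Set.Icc b c) h)
    {dminus dplus : ℝ}
    (hdm : HasDerivWithinAt h dminus (Set.Icc a b) b)
    (hdp : HasDerivWithinAt h dplus (Set.Icc b c) b)
    (hle : dminus ≤ dplus) :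
    ConvexOn ℝ (Set.Icc a c) h :=
  convexOn_of_convexOn_glue_general hconv₁ hconv₂ hdm hdp hle
end

section
/- Let 0 < δ < 1 and let Z be the closed unit disk centered at the origin in the Euclidean plane ℝ². Define f₀ : ℝ² → ℝ on Z by f₀(z) = √(1 − ‖z‖) if 1 − ‖z‖ ≤ 1/4, and f₀(z) = δ·√(1 − ‖z‖) + (1 − δ)/2 if 1 − ‖z‖ > 1/4. Then f₀ is strictly concave on Z. -/
/-!
Write `f₀(z) = ψ(1 - ‖z‖)` with `ψ(d) = min (√d) (δ√d + (1 - δ)/2)`: since `δ < 1`, the two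
branches cross exactly at `d = 1/4`, where `√d = 1/2`. As a minimum of two strictly concave,
strictly increasing functions, `ψ` is strictly concave and strictly increasing, and `1 - ‖z‖` is
concave. Along a segment on which `‖z‖` varies, strictness comes from `ψ`; along a chord of a
sphere `‖z‖ = r` it comes from the strict convexity of the Euclidean norm, which pushes the interior
of the chord strictly inside the sphere, where `ψ` is strictly larger.
-/

open Set Metric

lemma StrictConcaveOn.const_mul_add {E : Type*} [AddCommMonoid E] [Module ℝ E] {s : Set E}
    {f : E → ℝ} (hf : StrictConcaveOn ℝ s f) {c : ℝ} (hc : 0 < c) (d : ℝ) :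
    StrictConcaveOn ℝ s (fun x => c * f x + d) := by
  refine ⟨hf.1, fun x hx y hy hxy a b ha hb hab => ?_⟩
  have hlt := hf.2 hx hy hxy ha hb hab
  simp only [smul_eq_mul] at hlt ⊢
  calc a * (c * f x + d) + b * (c * f y + d) = c * (a * f x + b * f y) + d := by
        linear_combination d * hab
    _ < c * f (a • x + b • y) + d := by gcongr

lemma StrictMonoOn.inf {α β : Type*} [Preorder α] [LinearOrder β] {s : Set α} {f g : α → β}
    (hf : StrictMonoOn f s) (hg : StrictMonoOn g s) : StrictMonoOn (f ⊓ g) s :=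
  fun _ hx _ hy hxy => min_lt_min (hf hx hy hxy) (hg hx hy hxy)

lemma StrictConcaveOn.comp_one_sub_norm {E : Type*} [NormedAddCommGroup E] [NormedSpace ℝ E]
    [StrictConvexSpace ℝ E] {φ : ℝ → ℝ} (hφ : StrictConcaveOn ℝ (Icc 0 1) φ)
    (hφ_mono : StrictMonoOn φ (Icc 0 1)) :
    StrictConcaveOn ℝ (closedBall (0 : E) 1) (fun z => φ (1 - ‖z‖)) := by
  refine ⟨convex_closedBall _ _, fun x hx y hy hxy a b ha hb hab => ?_⟩
  rw [mem_closedBall_zero_iff] at hx hy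
  have hdist : ∀ z : E, ‖z‖ ≤ 1 → 1 - ‖z‖ ∈ Icc (0 : ℝ) 1 :=
    fun z hz => ⟨by linarith, by linarith [norm_nonneg z]⟩
  have hx' := hdist x hx
  have hy' := hdist y hy
  have hcombo : ‖a • x + b • y‖ ≤ a * ‖x‖ + b * ‖y‖ :=
    (convexOn_norm convex_univ).2 trivial trivial ha.le hb.le hab
  have hz' : 1 - ‖a • x + b • y‖ ∈ Icc (0 : ℝ) 1 := hdist _ <| hcombo.trans <| by nlinarith
  rcases eq_or_ne ‖x‖ ‖y‖ with hr | hr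
  · have hshrink : ‖a • x + b • y‖ < ‖x‖ := norm_combo_lt_of_ne le_rfl hr.ge hxy ha hb hab
    calc a • φ (1 - ‖x‖) + b • φ (1 - ‖y‖) = φ (1 - ‖x‖) := by
          rw [← hr, ← add_smul, hab, one_smul]
      _ < φ (1 - ‖a • x + b • y‖) := hφ_mono hx' hz' (by linarith)
  · have hmid : a • (1 - ‖x‖) + b • (1 - ‖y‖) ∈ Icc (0 : ℝ) 1 := hφ.1 hx' hy' ha.le hb.le hab
    have hle : a • (1 - ‖x‖) + b • (1 - ‖y‖) ≤ 1 - ‖a • x + b • y‖ := by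
      simp only [smul_eq_mul]; linear_combination hcombo + hab
    calc a • φ (1 - ‖x‖) + b • φ (1 - ‖y‖) < φ (a • (1 - ‖x‖) + b • (1 - ‖y‖)) :=
          hφ.2 hx' hy' (sub_right_injective.ne hr) ha hb hab
      _ ≤ φ (1 - ‖a • x + b • y‖) := hφ_mono.monotoneOn hmid hz' hle

lemma ite_sqrt_eq_min {δ d : ℝ} (hδ : δ < 1) :
    (if d ≤ 1 / 4 then √d else δ * √d + (1 - δ) / 2) = min √d (δ * √d + (1 - δ) / 2) := by
  have hhalf : √d ≤ 1 / 2 ↔ d ≤ 1 / 4 := by rw [Real.sqrt_le_left (by norm_num)]; norm_num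
  split_ifs with h
  · have hsqrt_le := hhalf.2 h
    exact (min_eq_left (by nlinarith)).symm
  · have hsqrt_gt := lt_of_not_ge (mt hhalf.1 h)
    exact (min_eq_right (by nlinarith)).symm

/-- **Lemma (the profile function `f₀` is strictly concave on the unit disk).**
Let `0 < δ < 1` and let `Z` be the closed unit disk in `ℝ²`.  The function
`f₀(z) = √(1 − ‖z‖)` when `1 − ‖z‖ ≤ 1/4`, and
`f₀(z) = δ·√(1 − ‖z‖) + (1 − δ)/2` otherwise, is strictly concave on `Z`. -/
theorem strictConcaveOn_profile_fn
    {δ : ℝ} (hδ0 : 0 < δ) (hδ1 : δ < 1) :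
    StrictConcaveOn ℝ (Metric.closedBall (0 : EuclideanSpace ℝ (Fin 2)) 1)
      (fun z : EuclideanSpace ℝ (Fin 2) =>
        if 1 - ‖z‖ ≤ 1 / 4 then Real.sqrt (1 - ‖z‖)
        else δ * Real.sqrt (1 - ‖z‖) + (1 - δ) / 2) := by
  set ψ : ℝ → ℝ := (fun d => √d) ⊓ fun d => δ * √d + (1 - δ) / 2
  have hψ : StrictConcaveOn ℝ (Icc 0 1) ψ :=
    (Real.strictConcaveOn_sqrt.inf (Real.strictConcaveOn_sqrt.const_mul_add hδ0 _)).subset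
      Icc_subset_Ici_self (convex_Icc 0 1)
  have hsqrt_mono : StrictMonoOn Real.sqrt (Icc 0 1) := fun s hs _ _ hst =>
    Real.sqrt_lt_sqrt hs.1 hst
  have hψ_mono : StrictMonoOn ψ (Icc 0 1) := hsqrt_mono.inf fun s hs t ht hst =>
    add_lt_add_left (mul_lt_mul_of_pos_left (hsqrt_mono hs ht hst) hδ0) _
  exact (StrictConcaveOn.comp_one_sub_norm hψ hψ_mono).congr fun z _ => (ite_sqrt_eq_min hδ1).symm
end

section
/- Let X be a separable metric space, let A ⊆ X be a bounded subset, let k ≥ 1 be an integer, and let C ≥ 0. Suppose that for every countable family {B̄(a_i, r_i)}_{i∈I} of pairwise disjoint closed balls with centers a_i ∈ A and radii 0 < r_i ≤ 1, one has ∑_{i∈I} r_i^k ≤ C. Then the k-dimensional Hausdorff measure of A satisfies H^k(A) ≤ 4^k · C. -/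
/-!
The closed balls of radius `2δ` around a maximal `2δ`-separated subset `S ⊆ A` cover `A`, while
the balls of radius `δ` around the points of `S` are pairwise disjoint (and countably many, since
`X` is separable). The packing bound gives `∑_{s ∈ S} δ^k ≤ C`, so these covers, of mesh `4δ`,
have `∑ (diam)^k ≤ 4^k C`; letting `δ → 0` bounds `H^k(A)`.
-/

open scoped ENNReal NNReal
open MeasureTheory Filter Topology Metric

namespace Metric

variable {X : Type*}

lemma exists_maximal_isSeparated [PseudoEMetricSpace X] (ε : ℝ≥0∞) (s : Set X) :
    ∃ N, Maximal (fun N ↦ N ⊆ s ∧ IsSeparated ε N) N :=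
  zorn_subset _ fun c hcs hc ↦
    ⟨⋃₀ c, ⟨Set.sUnion_subset fun _ ht ↦ (hcs ht).1,
      hc.pairwise_sUnion.2 fun _ ht ↦ (hcs ht).2⟩, fun _ ↦ Set.subset_sUnion_of_mem⟩

lemma IsSeparated.countable [PseudoEMetricSpace X] [TopologicalSpace.SeparableSpace X]
    {ε : ℝ≥0∞} {s : Set X} (hε : ε ≠ 0) (hs : IsSeparated ε s) : s.Countable := by
  refine Set.PairwiseDisjoint.countable_of_isOpen (s := fun x ↦ eball x (ε / 2))
    (fun x hx y hy hxy ↦ eball_disjoint ?_) (fun _ _ ↦ isOpen_eball)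
    (fun x _ ↦ ⟨x, mem_eball_self (ENNReal.half_pos hε)⟩)
  rw [ENNReal.add_halves]
  exact (hs hx hy hxy).le

end Metric

lemma hausdorffMeasure_le_of_isCover {X : Type*} [EMetricSpace X] [MeasurableSpace X]
    [BorelSpace X] {d : ℝ} (hd : 0 ≤ d) {s : Set X} {B : ℝ≥0∞} {ε : ℕ → ℝ≥0}
    (hε : Tendsto ε atTop (𝓝 0)) {N : ℕ → Set X} (hN : ∀ n, (N n).Countable)
    (hcov : ∀ n, IsCover (ε n) s (N n))
    (hsum : ∀ n, ∑' _ : N n, (2 * ε n : ℝ≥0∞) ^ d ≤ B) :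
    μH[d] s ≤ B := by
  have := fun n ↦ (hN n).to_subtype
  have h2ε : Tendsto (fun n ↦ 2 * (ε n : ℝ≥0∞)) atTop (𝓝 0) := by
    simpa using ENNReal.Tendsto.const_mul (ENNReal.tendsto_coe.2 hε) (a := 2) (by simp)
  have hdiam : ∀ n (x : N n), ediam (closedEBall (x : X) (ε n)) ≤ 2 * ε n :=
    fun _ _ ↦ ediam_closedEBall_le
  have hballs : ∀ n, s ⊆ ⋃ x : N n, closedEBall (x : X) (ε n) := fun n ↦ by
    simpa [Set.iUnion_subtype] using isCover_iff_subset_iUnion_closedEBall.1 (hcov n)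
  calc μH[d] s
      ≤ liminf (fun n ↦ ∑' x : N n, ediam (closedEBall (x : X) (ε n)) ^ d) atTop :=
        Measure.hausdorffMeasure_le_liminf_tsum d s _ h2ε _ (.of_forall hdiam) (.of_forall hballs)
    _ ≤ B := liminf_le_of_frequently_le' <| .of_forall fun n ↦
        (ENNReal.tsum_le_tsum fun x ↦ ENNReal.rpow_le_rpow (hdiam n x) hd).trans (hsum n)

lemma tsum_ofReal_pow_le_of_isSeparated {X : Type*} [MetricSpace X] {A : Set X} {k : ℕ} {C : ℝ}
    (hpack : ∀ (ι : Type) [Countable ι], ∀ (a : ι → X) (r : ι → ℝ),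
      (∀ i, a i ∈ A) → (∀ i, 0 < r i) → (∀ i, r i ≤ 1) →
      (Pairwise fun i j => Disjoint (closedBall (a i) (r i)) (closedBall (a j) (r j))) →
      ∑' i, ENNReal.ofReal (r i ^ k) ≤ ENNReal.ofReal C)
    {δ : ℝ≥0} (hδ₀ : 0 < δ) (hδ₁ : δ ≤ 1) {S : Set X} (hS : S.Countable) (hSA : S ⊆ A)
    (hsep : IsSeparated (2 * δ : ℝ≥0) S) :
    ∑' _ : S, ENNReal.ofReal ((δ : ℝ) ^ k) ≤ ENNReal.ofReal C := by
  have := hS.to_subtype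
  -- `hpack` only quantifies over index types in `Type`
  let e := (equivShrink.{0} S).symm
  have : Countable (Shrink.{0} S) := e.injective.countable
  rw [← e.tsum_eq]
  refine hpack _ (fun i ↦ e i) (fun _ ↦ δ) (fun i ↦ hSA (e i).2) (fun _ ↦ hδ₀) (fun _ ↦ hδ₁)
    fun i j hij ↦ closedBall_disjoint_closedBall ?_
  have h2δ : ((2 * δ : ℝ≥0) : ℝ≥0∞) < edist (e i : X) (e j) :=
    hsep (e i).2 (e j).2 (Subtype.coe_injective.ne (e.injective.ne hij))
  rw [edist_nndist, ENNReal.coe_lt_coe, ← NNReal.coe_lt_coe] at h2δ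
  simpa [two_mul] using h2δ

theorem hausdorffMeasure_le_of_packing_bound_general
    {X : Type*} [MetricSpace X] [TopologicalSpace.SeparableSpace X]
    [MeasurableSpace X] [BorelSpace X]
    {A : Set X}
    {k : ℕ} {C : ℝ}
    (hpack : ∀ (ι : Type) [Countable ι], ∀ (a : ι → X) (r : ι → ℝ),
      (∀ i, a i ∈ A) → (∀ i, 0 < r i) → (∀ i, r i ≤ 1) →
      (Pairwise fun i j =>
        Disjoint (Metric.closedBall (a i) (r i)) (Metric.closedBall (a j) (r j))) →
      ∑' i, ENNReal.ofReal (r i ^ k) ≤ ENNReal.ofReal C) :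
    μH[(k : ℝ)] A ≤ ENNReal.ofReal (4 ^ k * C) := by
  set δ : ℕ → ℝ≥0 := fun n ↦ ((n : ℝ≥0) + 1)⁻¹
  have hδ₀ n : 0 < δ n := by positivity
  have hδ₁ n : δ n ≤ 1 := inv_le_one_of_one_le₀ (by simp)
  have hδ : Tendsto (fun n ↦ 2 * δ n) atTop (𝓝 0) := by
    simpa using (tendsto_one_div_add_atTop_nhds_zero_nat (𝕜 := ℝ≥0)).const_mul 2
  choose S hS using fun n ↦ exists_maximal_isSeparated ((2 * δ n : ℝ≥0) : ℝ≥0∞) A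
  have hScount n : (S n).Countable := (hS n).prop.2.countable (by simpa using (hδ₀ n).ne')
  refine hausdorffMeasure_le_of_isCover (Nat.cast_nonneg k) hδ hScount
    (fun n ↦ .of_maximal_isSeparated (hS n)) fun n ↦ ?_
  calc ∑' _ : S n, (2 * (2 * δ n : ℝ≥0) : ℝ≥0∞) ^ (k : ℝ)
      = 4 ^ k * ∑' _ : S n, ENNReal.ofReal ((δ n : ℝ) ^ k) := by
        rw [← ENNReal.tsum_mul_left]
        congr 1 with _
        norm_num [ENNReal.rpow_natCast, ← mul_assoc, mul_pow]
    _ ≤ 4 ^ k * ENNReal.ofReal C := by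
        gcongr
        exact tsum_ofReal_pow_le_of_isSeparated hpack (hδ₀ n) (hδ₁ n) (hScount n)
          (hS n).prop.1 (hS n).prop.2
    _ = ENNReal.ofReal (4 ^ k * C) := by
        rw [ENNReal.ofReal_mul (by positivity), ENNReal.ofReal_pow (by norm_num)]
        norm_num

/-- **Lemma (Hausdorff measure bound from a packing estimate).**
Let `X` be a separable metric space, `A ⊆ X` bounded, `k ≥ 1`, `C ≥ 0`.  If every
countable family of pairwise disjoint closed balls with centers in `A` and radii in
`(0, 1]` satisfies `∑ i, (r i)^k ≤ C`, then `H^k(A) ≤ 4^k · C`. -/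
theorem hausdorffMeasure_le_of_packing_bound
    {X : Type*} [MetricSpace X] [TopologicalSpace.SeparableSpace X]
    [MeasurableSpace X] [BorelSpace X]
    {A : Set X} (hA : Bornology.IsBounded A)
    {k : ℕ} (hk : 1 ≤ k) {C : ℝ} (hC : 0 ≤ C)
    (hpack : ∀ (ι : Type) [Countable ι], ∀ (a : ι → X) (r : ι → ℝ),
      (∀ i, a i ∈ A) → (∀ i, 0 < r i) → (∀ i, r i ≤ 1) →
      (Pairwise fun i j =>
        Disjoint (Metric.closedBall (a i) (r i)) (Metric.closedBall (a j) (r j))) →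
      ∑' i, ENNReal.ofReal (r i ^ k) ≤ ENNReal.ofReal C) :
    μH[(k : ℝ)] A ≤ ENNReal.ofReal (4 ^ k * C) :=
  hausdorffMeasure_le_of_packing_bound_general hpack
end
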